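/- Let G be a graph and fix a vertex P ∈ V(G). For every n, k ∈ ℕ, the number of elements of the rank Weierstrass set H_r(P) lying in the interval [1, nk] is at least k times the number of elements of H_r(P) lying in [1, n], i.e., |H_r(P) ∩ [1, nk]| ≥ k · |H_r(P) ∩ [1, n]|. -/

import Mathlib

open scoped Classical

/-- A graph: a finite connected multigraph with no loop edges, given by a symmetric
edge-multiplicity function on a finite nonempty vertex type. -/
structure Multigraph where
  V : Type
  [fintypeV : Fintype V]
  [decEqV : DecidableEq V]
  [nonemptyV : Nonempty V]
  adj : V → V → ℕ
  adj_symm : ∀ u v, adj u v = adj v u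
  adj_loopless : ∀ v, adj v v = 0
  conn : ∀ u v, Relation.ReflTransGen (fun a b => adj a b ≠ 0) u v

attribute [instance] Multigraph.fintypeV Multigraph.decEqV Multigraph.nonemptyV

namespace Multigraph

variable (G : Multigraph)

/-- A simple graph: no multiple edges and more than one vertex. -/
def Simple : Prop :=
  (∀ u v, G.adj u v ≤ 1) ∧ 1 < Fintype.card G.V

/-- The degree of a divisor. -/
def deg (D : G.V → ℤ) : ℤ := ∑ v, D v

/-- A divisor is effective if all its coefficients are nonnegative. -/
def Effective (D : G.V → ℤ) : Prop := ∀ v, 0 ≤ D v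

/-- The Laplacian of an integer-valued function on the vertices. -/
def lap (f : G.V → ℤ) : G.V → ℤ := fun v => ∑ w, (G.adj v w : ℤ) * (f v - f w)

/-- The linear system `|D|` is nonempty, i.e. `D` is linearly equivalent to an
effective divisor. -/
def LinNonempty (D : G.V → ℤ) : Prop :=
  ∃ f : G.V → ℤ, G.Effective (D - G.lap f)

/-- The Baker–Norine rank of a divisor: `-1` if `|D| = ∅`, otherwise the maximal
`k` such that `|D - E| ≠ ∅` for every effective divisor `E` of degree `k`. -/
noncomputable def rank (D : G.V → ℤ) : ℤ :=
  if G.LinNonempty D then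
    ((sSup {k : ℕ | ∀ E : G.V → ℤ, G.Effective E → G.deg E = (k : ℤ) →
        G.LinNonempty (D - E)} : ℕ) : ℤ)
  else -1

/-- The divisor `n • P`. -/
def pt (P : G.V) (n : ℤ) : G.V → ℤ := fun v => if v = P then n else 0

/-- The rank Weierstrass set of `G` at `P`. -/
def Hr (P : G.V) : Set ℕ :=
  {n : ℕ | G.rank (G.pt P ((n : ℤ) - 1)) < G.rank (G.pt P (n : ℤ))}

/-- The functional Weierstrass set of `G` at `P`: pole orders at `P` of functions
with a unique pole at `P`. -/
def Hf (P : G.V) : Set ℕ :=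
  {n : ℕ | ∃ f : G.V → ℤ, G.lap f P = -(n : ℤ) ∧ ∀ Q, Q ≠ P → 0 ≤ G.lap f Q}

/-- The number of edges joining `Q` to vertices outside `A`. -/
def outdeg (A : Finset G.V) (Q : G.V) : ℕ := ∑ R ∈ Aᶜ, G.adj Q R

/-- A divisor is `P`-reduced. -/
def Reduced (P : G.V) (D : G.V → ℤ) : Prop :=
  (∀ Q, Q ≠ P → 0 ≤ D Q) ∧
  ∀ A : Finset G.V, A.Nonempty → P ∉ A → ∃ Q ∈ A, D Q < (G.outdeg A Q : ℤ)

/-- `G` is the graph `B_n` with two vertices joined by `n` parallel edges. -/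
def IsBanana (n : ℕ) : Prop :=
  Fintype.card G.V = 2 ∧ ∀ u v, u ≠ v → G.adj u v = n

/-- `G` is the complete graph on `n` vertices. -/
def IsComplete (n : ℕ) : Prop :=
  Fintype.card G.V = n ∧ ∀ u v, u ≠ v → G.adj u v = 1

/-- `G` is the complete bipartite graph with parts `A` (of size `m`) and its
complement (of size `n`). -/
def IsCompleteBipartite (A : Finset G.V) (m n : ℕ) : Prop :=
  A.card = m ∧ Aᶜ.card = n ∧
  ∀ u v, G.adj u v = if (u ∈ A ∧ v ∉ A) ∨ (u ∉ A ∧ v ∈ A) then 1 else 0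

/-- `λ_Q(k)`: the least `n` with `r(nQ) = k`. -/
noncomputable def lam (Q : G.V) (k : ℕ) : ℕ :=
  sInf {n : ℕ | G.rank (G.pt Q (n : ℤ)) = (k : ℤ)}

end Multigraph

/-- `G` is the vertex gluing of `G₁` and `G₂` identifying `P₁` and `P₂` into `P`. -/
def IsVertexGluing (G G₁ G₂ : Multigraph) (P : G.V) (P₁ : G₁.V) (P₂ : G₂.V) : Prop :=
  ∃ (ι₁ : G₁.V → G.V) (ι₂ : G₂.V → G.V),
    Function.Injective ι₁ ∧ Function.Injective ι₂ ∧
    ι₁ P₁ = P ∧ ι₂ P₂ = P ∧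
    (∀ a b, ι₁ a = ι₂ b → ι₁ a = P) ∧
    (∀ v : G.V, (∃ a, ι₁ a = v) ∨ (∃ b, ι₂ b = v)) ∧
    (∀ a b, G.adj (ι₁ a) (ι₁ b) = G₁.adj a b) ∧
    (∀ a b, G.adj (ι₂ a) (ι₂ b) = G₂.adj a b) ∧
    (∀ a b, ι₁ a ≠ P → ι₂ b ≠ P → G.adj (ι₁ a) (ι₂ b) = 0)

/-! Since `r(NP)` increases by `0` or `1` at each step and `r(0) = 0`, the number of elements
of `H_r(P)` in `[1, N]` is `r(NP)`. The rank is superadditive on divisors with nonempty linear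
systems, so `r(nkP) ≥ k r(nP)`. -/

lemma ncard_jumps_inter_Icc (f : ℤ → ℤ) (hmono : ∀ m : ℕ, f m ≤ f (m + 1))
    (hstep : ∀ m : ℕ, f (m + 1) ≤ f m + 1) (N : ℕ) :
    (({m : ℕ | f (m - 1) < f m} ∩ Set.Icc 1 N).ncard : ℤ) = f N - f 0 := by
  induction N with
  | zero => simp
  | succ N ih =>
    have hIcc : Set.Icc 1 (N + 1) = insert (N + 1) (Set.Icc 1 N) := by
      ext m; simp only [Set.mem_Icc, Set.mem_insert_iff]; omega
    have hnew : N + 1 ∉ Set.Icc 1 N := fun h => by simp at h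
    have hfin : ({m : ℕ | f (m - 1) < f m} ∩ Set.Icc 1 N).Finite :=
      (Set.finite_Icc 1 N).inter_of_right _
    push_cast
    specialize hmono N
    specialize hstep N
    by_cases hjump : f N < f (N + 1)
    · rw [hIcc, Set.inter_insert_of_mem (by simpa using hjump),
        Set.ncard_insert_of_notMem (fun h => hnew h.2) hfin]
      push_cast
      linarith
    · rw [hIcc, Set.inter_insert_of_notMem (by simpa using hjump)]
      linarith

namespace Multigraph

variable {G : Multigraph}

lemma deg_add (D E : G.V → ℤ) : G.deg (D + E) = G.deg D + G.deg E :=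
  Finset.sum_add_distrib

lemma deg_sub (D E : G.V → ℤ) : G.deg (D - E) = G.deg D - G.deg E :=
  Finset.sum_sub_distrib ..

lemma deg_pt (P : G.V) (m : ℤ) : G.deg (G.pt P m) = m := by
  simp [deg, pt]

lemma deg_lap (f : G.V → ℤ) : G.deg (G.lap f) = 0 := by
  simp only [deg, lap, mul_sub, Finset.sum_sub_distrib]
  rw [sub_eq_zero, Finset.sum_comm]
  simp only [G.adj_symm]

lemma lap_add (f g : G.V → ℤ) : G.lap (f + g) = G.lap f + G.lap g := by
  funext v
  simp only [lap, Pi.add_apply, ← Finset.sum_add_distrib]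
  exact Finset.sum_congr rfl fun w _ => by ring

lemma pt_zero (P : G.V) : G.pt P 0 = 0 := by
  funext v
  simp [pt]

lemma pt_add (P : G.V) (a b : ℤ) : G.pt P (a + b) = G.pt P a + G.pt P b := by
  funext v
  simp only [pt, Pi.add_apply]
  split_ifs <;> simp

lemma pt_mul (P : G.V) (k : ℕ) (a : ℤ) : G.pt P (k * a) = k • G.pt P a := by
  funext v
  simp only [pt, Pi.smul_apply, nsmul_eq_mul]
  split_ifs <;> simp

lemma Effective.add {D E : G.V → ℤ} (hD : G.Effective D) (hE : G.Effective E) :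
    G.Effective (D + E) := fun v => add_nonneg (hD v) (hE v)

lemma effective_pt (P : G.V) {m : ℤ} (hm : 0 ≤ m) : G.Effective (G.pt P m) := by
  intro v
  unfold pt
  split_ifs <;> simp [hm]

lemma Effective.deg_nonneg {D : G.V → ℤ} (hD : G.Effective D) : 0 ≤ G.deg D :=
  Finset.sum_nonneg fun v _ => hD v

lemma Effective.eq_zero_of_deg_eq_zero {D : G.V → ℤ} (hD : G.Effective D) (h : G.deg D = 0) :
    D = 0 :=
  funext fun v => (Finset.sum_eq_zero_iff_of_nonneg fun v _ => hD v).mp h v (Finset.mem_univ v)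

lemma Effective.exists_split {F : G.V → ℤ} (hF : G.Effective F) {a b : ℕ}
    (hdeg : G.deg F = a + b) :
    ∃ F₁ F₂, G.Effective F₁ ∧ G.Effective F₂ ∧ F = F₁ + F₂ ∧
      G.deg F₁ = a ∧ G.deg F₂ = b := by
  induction a generalizing F with
  | zero =>
    exact ⟨0, F, fun _ => le_rfl, hF, (zero_add F).symm, by simp [deg], by simpa using hdeg⟩
  | succ a ih =>
    obtain ⟨Q, hQ⟩ : ∃ Q, 0 < F Q := by
      by_contra! h
      have : G.deg F ≤ 0 := Finset.sum_nonpos fun v _ => h v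
      omega
    have hF' : G.Effective (F - G.pt Q 1) := by
      intro v
      simp only [Pi.sub_apply, pt]
      split_ifs with hv
      · subst hv; omega
      · simpa using hF v
    obtain ⟨F₁, F₂, h₁, h₂, hsplit, hd₁, hd₂⟩ :=
      ih hF' (by rw [deg_sub, deg_pt, hdeg]; push_cast; ring)
    refine ⟨F₁ + G.pt Q 1, F₂, h₁.add (effective_pt Q zero_le_one), h₂, ?_, ?_, hd₂⟩
    · rw [← sub_add_cancel F (G.pt Q 1), hsplit]
      abel
    · rw [deg_add, deg_pt, hd₁]; push_cast; ring

lemma Effective.linNonempty {D : G.V → ℤ} (hD : G.Effective D) : G.LinNonempty D :=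
  ⟨0, fun v => by simpa [lap] using hD v⟩

lemma LinNonempty.add {D D' : G.V → ℤ} (hD : G.LinNonempty D) (hD' : G.LinNonempty D') :
    G.LinNonempty (D + D') := by
  obtain ⟨f, hf⟩ := hD
  obtain ⟨g, hg⟩ := hD'
  refine ⟨f + g, fun v => ?_⟩
  have := add_nonneg (hf v) (hg v)
  simp only [lap_add, Pi.sub_apply, Pi.add_apply] at this ⊢
  linarith

lemma LinNonempty.nsmul {D : G.V → ℤ} (hD : G.LinNonempty D) (k : ℕ) :
    G.LinNonempty (k • D) := by
  induction k with
  | zero => exact Effective.linNonempty fun v => by simp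
  | succ k ih => rw [succ_nsmul]; exact ih.add hD

lemma LinNonempty.deg_nonneg {D : G.V → ℤ} (hD : G.LinNonempty D) : 0 ≤ G.deg D := by
  obtain ⟨f, hf⟩ := hD
  simpa [deg_sub, deg_lap] using hf.deg_nonneg

variable (G) in
def rankSet (D : G.V → ℤ) : Set ℕ :=
  {k : ℕ | ∀ E : G.V → ℤ, G.Effective E → G.deg E = (k : ℤ) → G.LinNonempty (D - E)}

lemma rank_of_linNonempty {D : G.V → ℤ} (hD : G.LinNonempty D) :
    G.rank D = (sSup (G.rankSet D) : ℕ) :=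
  if_pos hD

lemma le_deg_of_mem_rankSet {D : G.V → ℤ} {k : ℕ} (hk : k ∈ G.rankSet D) :
    (k : ℤ) ≤ G.deg D := by
  obtain ⟨Q⟩ := G.nonemptyV
  have := (hk (G.pt Q k) (effective_pt Q (Nat.cast_nonneg k)) (deg_pt Q k)).deg_nonneg
  rw [deg_sub, deg_pt] at this
  linarith

lemma bddAbove_rankSet (D : G.V → ℤ) : BddAbove (G.rankSet D) :=
  ⟨(G.deg D).toNat, fun k hk => by have := le_deg_of_mem_rankSet hk; omega⟩

lemma zero_mem_rankSet {D : G.V → ℤ} (hD : G.LinNonempty D) : 0 ∈ G.rankSet D := by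
  intro E hE hdeg
  rwa [hE.eq_zero_of_deg_eq_zero hdeg, sub_zero]

lemma sSup_rankSet_mem {D : G.V → ℤ} (hD : G.LinNonempty D) :
    sSup (G.rankSet D) ∈ G.rankSet D :=
  Nat.sSup_mem ⟨0, zero_mem_rankSet hD⟩ (bddAbove_rankSet D)

lemma rank_nonneg {D : G.V → ℤ} (hD : G.LinNonempty D) : 0 ≤ G.rank D := by
  rw [rank_of_linNonempty hD]
  positivity

lemma rank_zero : G.rank 0 = 0 := by
  have h0 : G.LinNonempty 0 := Effective.linNonempty fun _ => le_rfl
  have : sSup (G.rankSet 0) = 0 := by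
    refine Nat.le_zero.mp (csSup_le ⟨0, zero_mem_rankSet h0⟩ fun k hk => ?_)
    have := le_deg_of_mem_rankSet hk
    simp only [deg, Pi.zero_apply, Finset.sum_const_zero] at this
    omega
  rw [rank_of_linNonempty h0, this, Nat.cast_zero]

/-- A test divisor of degree `r(D) + r(D')` splits into test divisors for `D` and `D'`. -/
lemma rank_add_rank_le_rank_add {D D' : G.V → ℤ} (hD : G.LinNonempty D)
    (hD' : G.LinNonempty D') : G.rank D + G.rank D' ≤ G.rank (D + D') := by
  have hmem : sSup (G.rankSet D) + sSup (G.rankSet D') ∈ G.rankSet (D + D') := by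
    intro F hF hdeg
    obtain ⟨F₁, F₂, h₁, h₂, rfl, hd₁, hd₂⟩ := hF.exists_split (by exact_mod_cast hdeg)
    have := (sSup_rankSet_mem hD F₁ h₁ hd₁).add (sSup_rankSet_mem hD' F₂ h₂ hd₂)
    rwa [add_sub_add_comm]
  rw [rank_of_linNonempty hD, rank_of_linNonempty hD', rank_of_linNonempty (hD.add hD')]
  exact_mod_cast le_csSup (bddAbove_rankSet _) hmem

lemma rank_le_rank_add {D E : G.V → ℤ} (hD : G.LinNonempty D) (hE : G.Effective E) :
    G.rank D ≤ G.rank (D + E) := by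
  have := rank_add_rank_le_rank_add hD hE.linNonempty
  have := rank_nonneg hE.linNonempty
  linarith

lemma rank_add_le {D E : G.V → ℤ} (hD : G.LinNonempty D) (hE : G.Effective E) :
    G.rank (D + E) ≤ G.rank D + G.deg E := by
  obtain ⟨e, he⟩ := Int.eq_ofNat_of_zero_le hE.deg_nonneg
  have hDE := hD.add hE.linNonempty
  suffices sSup (G.rankSet (D + E)) ≤ sSup (G.rankSet D) + e by
    rw [rank_of_linNonempty hD, rank_of_linNonempty hDE, he]
    exact_mod_cast this
  refine csSup_le ⟨0, zero_mem_rankSet hDE⟩ fun k hk => ?_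
  rcases lt_or_ge k e with hlt | hle
  · omega
  obtain ⟨c, rfl⟩ := Nat.exists_eq_add_of_le' hle
  have hc : c ∈ G.rankSet D := by
    intro F hF hdeg
    have := hk (F + E) (hF.add hE) (by rw [deg_add, hdeg, he]; push_cast; ring)
    rwa [add_sub_add_right_eq_sub] at this
  have := le_csSup (bddAbove_rankSet D) hc
  omega

lemma nsmul_rank_le_rank_nsmul {D : G.V → ℤ} (hD : G.LinNonempty D) (k : ℕ) :
    k * G.rank D ≤ G.rank (k • D) := by
  induction k with
  | zero => simp [rank_zero]
  | succ k ih =>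
    have := rank_add_rank_le_rank_add (hD.nsmul k) hD
    rw [succ_nsmul]
    push_cast
    linarith

lemma ncard_Hr_inter_Icc (P : G.V) (N : ℕ) :
    ((G.Hr P ∩ Set.Icc 1 N).ncard : ℤ) = G.rank (G.pt P N) := by
  have hsucc (m : ℕ) : G.pt P (m + 1) = G.pt P m + G.pt P 1 := pt_add P m 1
  have hm (m : ℕ) : G.LinNonempty (G.pt P m) := (effective_pt P m.cast_nonneg).linNonempty
  have hjumps := ncard_jumps_inter_Icc (fun m => G.rank (G.pt P m))
    (fun m => hsucc m ▸ rank_le_rank_add (hm m) (effective_pt P zero_le_one))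
    (fun m => by simpa [hsucc, deg_pt] using rank_add_le (hm m) (effective_pt P zero_le_one)) N
  rwa [pt_zero, rank_zero, sub_zero] at hjumps

end Multigraph

/-- `|H_r(P) ∩ [1, nk]| ≥ k ⬝ |H_r(P) ∩ [1, n]|`. -/
theorem Hr_card_interval (G : Multigraph) (P : G.V) (n k : ℕ) :
    k * (G.Hr P ∩ Set.Icc 1 n).ncard ≤ (G.Hr P ∩ Set.Icc 1 (n * k)).ncard := by
  have hn : G.LinNonempty (G.pt P n) := (G.effective_pt P n.cast_nonneg).linNonempty
  have hpt : G.pt P ((n * k : ℕ) : ℤ) = k • G.pt P n := by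
    rw [← G.pt_mul, Nat.cast_mul, mul_comm]
  have := G.nsmul_rank_le_rank_nsmul hn k
  rw [← hpt, ← G.ncard_Hr_inter_Icc, ← G.ncard_Hr_inter_Icc] at this
  exact_mod_cast this
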